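/- In the setting of Proposition 2, with p_k(x) the solution of B_k p = -(Hx+c) for the full-memory approximation B_k, there exists a unique σ_k > 0, namely σ_k = -(q_k^T H q_k)/(q_k^T (Hx+c)) with q_k = -ĝ_k + ((ĝ_k^T H q_{k-1})/(q_{k-1}^T H q_{k-1}))q_{k-1}, such that x + p_k(x) is the minimizer of f over x_0 + K_{k+1}(g_0,H). -/

import Mathlib

/-!
The scaled steps `q_i` are nonzero (as `ĝ_k ≠ 0`) and pairwise `H`-conjugate, so they form a basis
of `K_k`: the columns of `Q` span `K_k` and both inverses in `B_k` exist. On `K_k` the matrix `B_k`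
acts as `H` (`B_k Q = H Q`), while it maps `q_k = -ĝ_k + β q_{k-1}`, which is `H`-conjugate to
`K_k`, to `-σ ĝ_k`. As `B_k` is injective for `σ ≠ 0`, `x + p_k(x) = x̂_k + σ⁻¹ q_k`. Since
`ĝ_k ⊥ K_k` and `K_{k+1} = K_k ⊕ span q_k`, this point minimizes `f` on `x_0 + K_{k+1}` exactly
when `σ⁻¹` is the exact line-search step `‖ĝ_k‖² / q_kᵀ H q_k`, i.e. when `σ = σ_k`.
-/

open Matrix

def krylov {n : ℕ} (b : Fin n → ℝ) (A : Matrix (Fin n) (Fin n) ℝ) (k : ℕ) :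
    Submodule ℝ (Fin n → ℝ) :=
  Submodule.span ℝ (Set.range fun i : Fin k => (A ^ (i : ℕ)).mulVec b)

open Module Submodule Set

theorem Matrix.IsSymm.dotProduct_mulVec_comm {ι R : Type*} [Fintype ι] [CommSemiring R]
    {A : Matrix ι ι R} (hA : A.IsSymm) (u v : ι → R) : u ⬝ᵥ A *ᵥ v = v ⬝ᵥ A *ᵥ u := by
  rw [dotProduct_mulVec, ← mulVec_transpose, hA.eq, dotProduct_comm]

theorem Matrix.PosSemidef.isSymm {ι : Type*} {A : Matrix ι ι ℝ} (hA : A.PosSemidef) :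
    A.IsSymm := by
  simpa [IsSymm, conjTranspose_eq_transpose_of_trivial] using hA.1.eq

theorem isUnit_det_transpose_mul_mul {ι κ : Type*} [Fintype ι] [Fintype κ] [DecidableEq κ]
    {H : Matrix ι ι ℝ} (hH : H.PosDef) {Q : Matrix ι κ ℝ} (hQ : Function.Injective Q.mulVec) :
    IsUnit (Qᵀ * H * Q).det := by
  have := (hH.conjTranspose_mul_mul_same hQ).isUnit
  rwa [conjTranspose_eq_transpose_of_trivial, isUnit_iff_isUnit_det] at this

def IsMinOnCoset {V : Type*} [AddCommGroup V] [Module ℝ V] (f : V → ℝ) (x0 : V)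
    (S : Submodule ℝ V) (z : V) : Prop :=
  z - x0 ∈ S ∧ ∀ y, y - x0 ∈ S → f z ≤ f y

section Quadratic

variable {ι : Type*} [Fintype ι] {H : Matrix ι ι ℝ} {c : ι → ℝ}

noncomputable def quadObjective (H : Matrix ι ι ℝ) (c x : ι → ℝ) : ℝ :=
  1 / 2 * (x ⬝ᵥ H *ᵥ x) + c ⬝ᵥ x

theorem quadObjective_eq (hH : H.IsSymm) (z y : ι → ℝ) :
    quadObjective H c y = quadObjective H c z + (H *ᵥ z + c) ⬝ᵥ (y - z)
      + 1 / 2 * ((y - z) ⬝ᵥ H *ᵥ (y - z)) := by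
  simp only [quadObjective, mulVec_sub, dotProduct_sub, sub_dotProduct, add_dotProduct]
  rw [dotProduct_comm (H *ᵥ z) y, dotProduct_comm (H *ᵥ z) z, hH.dotProduct_mulVec_comm y z]
  ring

theorem isMinOnCoset_quadObjective_iff (hH : H.PosSemidef) {S : Submodule ℝ (ι → ℝ)}
    {x0 z : ι → ℝ} (hz : z - x0 ∈ S) :
    IsMinOnCoset (quadObjective H c) x0 S z ↔ ∀ s ∈ S, (H *ᵥ z + c) ⬝ᵥ s = 0 := by
  refine ⟨fun ⟨_, hmin⟩ s hs => ?_, fun horth => ⟨hz, fun y hy => ?_⟩⟩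
  · have hquad : ∀ t : ℝ,
        0 ≤ 1 / 2 * (s ⬝ᵥ H *ᵥ s) * (t * t) + (H *ᵥ z + c) ⬝ᵥ s * t + 0 := by
      intro t
      have hle := hmin (z + t • s) <| by
        simpa [add_sub_right_comm] using S.add_mem hz (S.smul_mem t hs)
      rw [quadObjective_eq hH.isSymm z (z + t • s)] at hle
      simp only [add_sub_cancel_left, dotProduct_smul, smul_dotProduct, mulVec_smul,
        smul_eq_mul] at hle
      linarith
    have hdiscrim := discrim_le_zero hquad
    rw [discrim] at hdiscrim
    nlinarith [sq_nonneg ((H *ᵥ z + c) ⬝ᵥ s)]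
  · rw [quadObjective_eq hH.isSymm z y, horth _ (by simpa using S.sub_mem hy hz)]
    have := hH.dotProduct_mulVec_nonneg (y - z)
    simp only [star_trivial] at this
    linarith

theorem dotProduct_eq_zero_of_mem_sup_span {S : Submodule ℝ (ι → ℝ)} {g d : ι → ℝ}
    (hS : ∀ s ∈ S, g ⬝ᵥ s = 0) (hd : g ⬝ᵥ d = 0) : ∀ s ∈ S ⊔ span ℝ {d}, g ⬝ᵥ s = 0 := by
  intro s hs
  obtain ⟨u, hu, v, hv, rfl⟩ := mem_sup.1 hs
  obtain ⟨t, rfl⟩ := mem_span_singleton.1 hv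
  rw [dotProduct_add, dotProduct_smul, hS u hu, hd, smul_zero, add_zero]

theorem isMinOnCoset_add_smul_iff (hH : H.PosSemidef) {S : Submodule ℝ (ι → ℝ)}
    {x0 z d : ι → ℝ} (hz : z - x0 ∈ S) (hzmin : ∀ s ∈ S, (H *ᵥ z + c) ⬝ᵥ s = 0)
    (hd : ∀ s ∈ S, d ⬝ᵥ H *ᵥ s = 0) (α : ℝ) :
    IsMinOnCoset (quadObjective H c) x0 (S ⊔ span ℝ {d}) (z + α • d) ↔
      α * (d ⬝ᵥ H *ᵥ d) = -((H *ᵥ z + c) ⬝ᵥ d) := by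
  have hmem : z + α • d - x0 ∈ S ⊔ span ℝ {d} := by
    rw [add_sub_right_comm]
    exact add_mem (mem_sup_left hz) (mem_sup_right (smul_mem _ α (mem_span_singleton_self d)))
  have hgrad : H *ᵥ (z + α • d) + c = (H *ᵥ z + c) + α • H *ᵥ d := by
    rw [mulVec_add, mulVec_smul]; abel
  have hS : ∀ s ∈ S, (H *ᵥ (z + α • d) + c) ⬝ᵥ s = 0 := fun s hs => by
    rw [hgrad, add_dotProduct, smul_dotProduct, hzmin s hs, dotProduct_comm (H *ᵥ d),
      hH.isSymm.dotProduct_mulVec_comm, hd s hs, smul_zero, add_zero]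
  rw [isMinOnCoset_quadObjective_iff hH hmem]
  refine ⟨fun h => ?_, fun h => dotProduct_eq_zero_of_mem_sup_span hS ?_⟩
  · have := h d (mem_sup_right (mem_span_singleton_self d))
    rw [hgrad, add_dotProduct, smul_dotProduct, smul_eq_mul, dotProduct_comm (H *ᵥ d)] at this
    linarith
  · rw [hgrad, add_dotProduct, smul_dotProduct, smul_eq_mul, dotProduct_comm (H *ᵥ d), h]
    ring

theorem dotProduct_mulVec_add_eq {S : Submodule ℝ (ι → ℝ)} {d x z : ι → ℝ}
    (hd : ∀ s ∈ S, d ⬝ᵥ H *ᵥ s = 0) (hxz : z - x ∈ S) :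
    d ⬝ᵥ (H *ᵥ x + c) = d ⬝ᵥ (H *ᵥ z + c) := by
  have hgrad : H *ᵥ x + c = (H *ᵥ z + c) - H *ᵥ (z - x) := by rw [mulVec_sub]; abel
  rw [hgrad, dotProduct_sub, hd _ hxz, sub_zero]

end Quadratic

section Conjugate

variable {ι κ : Type*} [Fintype ι] {H : Matrix ι ι ℝ}

theorem dotProduct_mulVec_eq_zero_of_mem_span {u : ι → ℝ} {v : κ → ι → ℝ}
    (h : ∀ i, u ⬝ᵥ H *ᵥ v i = 0) {s : ι → ℝ} (hs : s ∈ span ℝ (range v)) :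
    u ⬝ᵥ H *ᵥ s = 0 := by
  classical
  have hle : span ℝ (range v) ≤ LinearMap.ker (toLinearMap₂' ℝ H u) :=
    span_le.2 (range_subset_iff.2 fun i => by simp [toLinearMap₂'_apply', h])
  simpa [toLinearMap₂'_apply'] using hle hs

theorem linearIndependent_of_pairwise_dotProduct_mulVec_eq_zero (hH : H.PosDef)
    {v : κ → ι → ℝ} (hconj : Pairwise fun i j => v i ⬝ᵥ H *ᵥ v j = 0) (hv : ∀ i, v i ≠ 0) :
    LinearIndependent ℝ v := by
  classical
  exact LinearMap.BilinForm.linearIndependent_of_iIsOrtho (B := toBilin' H)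
    (fun i j hij => by simpa [toBilin'_apply'] using hconj hij)
    (fun i => by simpa [toBilin'_apply'] using (hH.dotProduct_mulVec_pos (hv i)).ne')

noncomputable def cgDirection (H : Matrix ι ι ℝ) (g v : ι → ℝ) : ι → ℝ :=
  -g + ((g ⬝ᵥ H *ᵥ v) / (v ⬝ᵥ H *ᵥ v)) • v

theorem cgDirection_dotProduct_mulVec_eq_zero {q : κ → ι → ℝ} {g : ι → ℝ} {i₀ : κ}
    (hconj : Pairwise fun i j => q i ⬝ᵥ H *ᵥ q j = 0) (hg : ∀ i, i ≠ i₀ → g ⬝ᵥ H *ᵥ q i = 0)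
    (hq : q i₀ ⬝ᵥ H *ᵥ q i₀ ≠ 0) {s : ι → ℝ} (hs : s ∈ span ℝ (range q)) :
    cgDirection H g (q i₀) ⬝ᵥ H *ᵥ s = 0 := by
  refine dotProduct_mulVec_eq_zero_of_mem_span (fun i => ?_) hs
  rw [cgDirection, add_dotProduct, neg_dotProduct, smul_dotProduct, smul_eq_mul]
  by_cases hi : i = i₀
  · subst hi
    field_simp
    ring
  · rw [hg i hi, hconj (Ne.symm hi)]
    ring

theorem cgDirection_dotProduct_eq_neg {g v : ι → ℝ} (hv : v ⬝ᵥ g = 0) :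
    cgDirection H g v ⬝ᵥ g = -(g ⬝ᵥ g) := by
  rw [cgDirection, add_dotProduct, neg_dotProduct, smul_dotProduct, hv, smul_zero, add_zero]

theorem cgDirection_add_self (g v : ι → ℝ) :
    cgDirection H g v + g = ((g ⬝ᵥ H *ᵥ v) / (v ⬝ᵥ H *ᵥ v)) • v :=
  neg_add_cancel_comm g _

end Conjugate

section FullMemory

variable {R : Type*} [Field R] {m k : Type*} [Fintype m] [Fintype k] [DecidableEq k]

theorem transpose_mulVec_eq_zero_of_forall_dotProduct {Q : Matrix m k R} {w : m → R}
    (h : ∀ a, w ⬝ᵥ Q *ᵥ a = 0) : Qᵀ *ᵥ w = 0 := by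
  funext j
  rw [← single_one_dotProduct j (Qᵀ *ᵥ w), dotProduct_mulVec, vecMul_transpose, dotProduct_comm,
    h, Pi.zero_apply]

theorem transpose_mul_mul_inv_mul (A : Matrix m m R) (Q : Matrix m k R)
    (hA : IsUnit (Qᵀ * A * Q).det) : Qᵀ * (A * Q * (Qᵀ * A * Q)⁻¹ * Qᵀ * A) = Qᵀ * A := by
  calc _ = Qᵀ * A * Q * (Qᵀ * A * Q)⁻¹ * (Qᵀ * A) := by simp only [Matrix.mul_assoc]
    _ = Qᵀ * A := by rw [mul_nonsing_inv _ hA, Matrix.one_mul]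

theorem mul_inv_mul_mul_self (A : Matrix m m R) (Q : Matrix m k R)
    (hA : IsUnit (Qᵀ * A * Q).det) : A * Q * (Qᵀ * A * Q)⁻¹ * Qᵀ * A * Q = A * Q := by
  calc _ = A * Q * ((Qᵀ * A * Q)⁻¹ * (Qᵀ * A * Q)) := by simp only [Matrix.mul_assoc]
    _ = A * Q := by rw [nonsing_inv_mul _ hA, Matrix.mul_one]

variable [DecidableEq m]

noncomputable def fullMemoryApprox (σ : R) (H : Matrix m m R) (Q : Matrix m k R) :
    Matrix m m R :=
  σ • (1 - Q * (Qᵀ * Q)⁻¹ * Qᵀ) + H * Q * (Qᵀ * H * Q)⁻¹ * Qᵀ * H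

variable {σ : R} {H : Matrix m m R} {Q : Matrix m k R}

theorem fullMemoryApprox_mulVec (v : m → R) :
    fullMemoryApprox σ H Q *ᵥ v = σ • (v - Q *ᵥ (Qᵀ * Q)⁻¹ *ᵥ Qᵀ *ᵥ v)
      + H *ᵥ Q *ᵥ (Qᵀ * H * Q)⁻¹ *ᵥ Qᵀ *ᵥ H *ᵥ v := by
  simp only [fullMemoryApprox, add_mulVec, smul_mulVec, sub_mulVec, one_mulVec, ← mulVec_mulVec]

theorem transpose_mul_fullMemoryApprox (hG : IsUnit (Qᵀ * Q).det)
    (hD : IsUnit (Qᵀ * H * Q).det) : Qᵀ * fullMemoryApprox σ H Q = Qᵀ * H := by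
  have hP := transpose_mul_mul_inv_mul 1 Q (by simpa using hG)
  simp only [Matrix.mul_one, Matrix.one_mul] at hP
  rw [fullMemoryApprox, Matrix.mul_add, Matrix.mul_smul, Matrix.mul_sub, Matrix.mul_one, hP,
    sub_self, smul_zero, zero_add, transpose_mul_mul_inv_mul H Q hD]

theorem fullMemoryApprox_mul_self (hG : IsUnit (Qᵀ * Q).det)
    (hD : IsUnit (Qᵀ * H * Q).det) : fullMemoryApprox σ H Q * Q = H * Q := by
  have hP := mul_inv_mul_mul_self 1 Q (by simpa using hG)
  simp only [Matrix.mul_one, Matrix.one_mul] at hP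
  rw [fullMemoryApprox, Matrix.add_mul, Matrix.smul_mul, Matrix.sub_mul, Matrix.one_mul, hP,
    sub_self, smul_zero, zero_add, mul_inv_mul_mul_self H Q hD]

theorem fullMemoryApprox_mulVec_add (hG : IsUnit (Qᵀ * Q).det) {w : m → R} (a : k → R)
    (hw : Qᵀ *ᵥ w = 0) (hHw : Qᵀ *ᵥ H *ᵥ (w + Q *ᵥ a) = 0) :
    fullMemoryApprox σ H Q *ᵥ (w + Q *ᵥ a) = σ • w := by
  rw [fullMemoryApprox_mulVec, hHw, mulVec_add Qᵀ, hw, zero_add, mulVec_mulVec a Qᵀ,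
    mulVec_mulVec a, nonsing_inv_mul _ hG, one_mulVec]
  simp

theorem fullMemoryApprox_mulVec_injective (hσ : σ ≠ 0) (hG : IsUnit (Qᵀ * Q).det)
    (hD : IsUnit (Qᵀ * H * Q).det) : Function.Injective (fullMemoryApprox σ H Q).mulVec := by
  refine (injective_iff_map_eq_zero (fullMemoryApprox σ H Q).mulVecLin).2 fun v hv => ?_
  rw [mulVecLin_apply] at hv
  have hHv : Qᵀ *ᵥ H *ᵥ v = 0 := by
    rw [mulVec_mulVec, ← transpose_mul_fullMemoryApprox (σ := σ) hG hD, ← mulVec_mulVec, hv,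
      mulVec_zero]
  set a := (Qᵀ * Q)⁻¹ *ᵥ Qᵀ *ᵥ v
  have hva : v = Q *ᵥ a := by
    rw [fullMemoryApprox_mulVec, hHv, mulVec_zero, mulVec_zero, mulVec_zero, add_zero,
      smul_eq_zero] at hv
    exact sub_eq_zero.1 (hv.resolve_left hσ)
  have ha : a = 0 := by
    apply (mulVec_injective_of_isUnit ((isUnit_iff_isUnit_det _).2 hD)).eq_iff' (mulVec_zero _)
      |>.1
    rw [← mulVec_mulVec, ← mulVec_mulVec, ← hva, hHv]
  rw [hva, ha, mulVec_zero]

theorem add_eq_of_fullMemoryApprox_mulVec_eq (hσ : σ ≠ 0) (hG : IsUnit (Qᵀ * Q).det)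
    (hD : IsUnit (Qᵀ * H * Q).det) {c x z d p : m → R}
    (hzx : z - x ∈ LinearMap.range Q.mulVecLin) (hz : Qᵀ *ᵥ (H *ᵥ z + c) = 0)
    (hd : Qᵀ *ᵥ H *ᵥ d = 0) (hdz : d + (H *ᵥ z + c) ∈ LinearMap.range Q.mulVecLin)
    (hp : fullMemoryApprox σ H Q *ᵥ p = -(H *ᵥ x + c)) : x + p = z + σ⁻¹ • d := by
  obtain ⟨a, ha⟩ := hzx
  obtain ⟨b, hb⟩ := hdz
  rw [mulVecLin_apply] at ha hb
  have hdb : d = -(H *ᵥ z + c) + Q *ᵥ b := by rw [hb]; abel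
  have hBd : fullMemoryApprox σ H Q *ᵥ d = σ • -(H *ᵥ z + c) := by
    rw [hdb]
    exact fullMemoryApprox_mulVec_add hG b (by rw [mulVec_neg, hz, neg_zero]) (hdb ▸ hd)
  have hBzx : fullMemoryApprox σ H Q *ᵥ (z - x) = H *ᵥ (z - x) := by
    rw [← ha, mulVec_mulVec, fullMemoryApprox_mul_self hG hD, ← mulVec_mulVec]
  have hpeq : p = (z - x) + σ⁻¹ • d := by
    refine fullMemoryApprox_mulVec_injective hσ hG hD ?_
    rw [hp, mulVec_add, mulVec_smul, hBd, hBzx, smul_smul, inv_mul_cancel₀ hσ, one_smul,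
      mulVec_sub]
    abel
  rw [hpeq]
  abel

end FullMemory

theorem add_eq_of_fullMemoryApprox_mulVec_eq_of_posDef {ι κ : Type*} [Fintype ι]
    [DecidableEq ι] [Fintype κ] [DecidableEq κ] {H : Matrix ι ι ℝ} (hH : H.PosDef)
    {Q : Matrix ι κ ℝ} (hQ : Function.Injective Q.mulVec) {S : Submodule ℝ (ι → ℝ)}
    (hS : LinearMap.range Q.mulVecLin = S) {σ : ℝ} (hσ : σ ≠ 0) {c x z d p : ι → ℝ}
    (hzx : z - x ∈ S) (hz : ∀ s ∈ S, (H *ᵥ z + c) ⬝ᵥ s = 0) (hd : ∀ s ∈ S, d ⬝ᵥ H *ᵥ s = 0)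
    (hdz : d + (H *ᵥ z + c) ∈ S) (hp : fullMemoryApprox σ H Q *ᵥ p = -(H *ᵥ x + c)) :
    x + p = z + σ⁻¹ • d := by
  subst hS
  have hQmem : ∀ a, Q *ᵥ a ∈ LinearMap.range Q.mulVecLin := LinearMap.mem_range_self _
  refine add_eq_of_fullMemoryApprox_mulVec_eq hσ
    (by simpa using isUnit_det_transpose_mul_mul PosDef.one hQ)
    (isUnit_det_transpose_mul_mul hH hQ) hzx
    (transpose_mulVec_eq_zero_of_forall_dotProduct fun a => hz _ (hQmem a))
    (transpose_mulVec_eq_zero_of_forall_dotProduct fun a => ?_) hdz hp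
  rw [dotProduct_comm, hH.posSemidef.isSymm.dotProduct_mulVec_comm]
  exact hd _ (hQmem a)

section Krylov

variable {n : ℕ} (b : Fin n → ℝ) (A : Matrix (Fin n) (Fin n) ℝ)

theorem krylov_mono {i j : ℕ} (h : i ≤ j) : krylov b A i ≤ krylov b A j :=
  span_mono (range_subset_iff.2 fun l => ⟨⟨l, l.2.trans_le h⟩, rfl⟩)

theorem self_mem_krylov {j : ℕ} (hj : 1 ≤ j) : b ∈ krylov b A j :=
  subset_span ⟨⟨0, hj⟩, by simp⟩

theorem mulVec_mem_krylov_succ {j : ℕ} {v : Fin n → ℝ} (hv : v ∈ krylov b A j) :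
    A *ᵥ v ∈ krylov b A (j + 1) := by
  have hle : (krylov b A j).map A.mulVecLin ≤ krylov b A (j + 1) := by
    rw [krylov, map_span, span_le]
    rintro _ ⟨_, ⟨i, rfl⟩, rfl⟩
    exact subset_span ⟨⟨i + 1, by omega⟩, by simp [pow_succ', mulVec_mulVec]⟩
  exact hle (mem_map_of_mem hv)

theorem finrank_krylov_le (j : ℕ) : finrank ℝ (krylov b A j) ≤ j :=
  (finrank_range_le_card (R := ℝ) _).trans_eq (Fintype.card_fin j)

theorem krylov_succ_eq_sup_span {k : ℕ} (hdim : finrank ℝ (krylov b A k) = k)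
    {d : Fin n → ℝ} (hd : d ∈ krylov b A (k + 1)) (hdk : d ∉ krylov b A k) :
    krylov b A (k + 1) = krylov b A k ⊔ span ℝ {d} :=
  (eq_of_le_of_finrank_le (sup_le (krylov_mono b A k.le_succ)
    ((span_singleton_le_iff_mem _ _).2 hd))
    (by rw [finrank_sup_span_singleton hdk, hdim]; exact finrank_krylov_le b A (k + 1))).symm

theorem mulVec_add_mem_krylov_succ {c x0 y : Fin n → ℝ} (hb : b = A *ᵥ x0 + c) {j : ℕ}
    (hy : y - x0 ∈ krylov b A j) : A *ᵥ y + c ∈ krylov b A (j + 1) := by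
  have hgrad : A *ᵥ y + c = A *ᵥ (y - x0) + b := by rw [hb, mulVec_sub]; abel
  rw [hgrad]
  exact add_mem (mulVec_mem_krylov_succ b A hy) (self_mem_krylov b A (by omega))

end Krylov

section KrylovMinimizers

variable {n : ℕ} {H : Matrix (Fin n) (Fin n) ℝ} {c x0 g0 : Fin n → ℝ} {xhat : ℕ → Fin n → ℝ}

theorem sub_mem_krylov_succ (hmem : ∀ j, xhat j - x0 ∈ krylov g0 H j) (i : ℕ) :
    xhat (i + 1) - xhat i ∈ krylov g0 H (i + 1) := by
  simpa using sub_mem (hmem (i + 1)) (krylov_mono g0 H i.le_succ (hmem i))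

theorem sub_dotProduct_mulVec_sub_eq_zero (hmem : ∀ j, xhat j - x0 ∈ krylov g0 H j)
    (hperp : ∀ j, ∀ s ∈ krylov g0 H j, (H *ᵥ xhat j + c) ⬝ᵥ s = 0) {i j : ℕ} (hij : i < j) :
    (xhat (i + 1) - xhat i) ⬝ᵥ H *ᵥ (xhat (j + 1) - xhat j) = 0 := by
  have hi := krylov_mono g0 H (by omega : i + 1 ≤ j) (sub_mem_krylov_succ hmem i)
  have hdiff : H *ᵥ (xhat (j + 1) - xhat j) = (H *ᵥ xhat (j + 1) + c) - (H *ᵥ xhat j + c) := by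
    rw [mulVec_sub]; abel
  rw [hdiff, dotProduct_sub, dotProduct_comm, hperp _ _ (krylov_mono g0 H j.le_succ hi),
    dotProduct_comm, hperp _ _ hi, sub_zero]

theorem gradient_eq_zero_of_succ_eq (hg0 : g0 = H *ᵥ x0 + c)
    (hmem : ∀ j, xhat j - x0 ∈ krylov g0 H j)
    (hperp : ∀ j, ∀ s ∈ krylov g0 H j, (H *ᵥ xhat j + c) ⬝ᵥ s = 0) {i : ℕ}
    (h : xhat (i + 1) = xhat i) : H *ᵥ xhat i + c = 0 := by
  apply dotProduct_self_eq_zero.1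
  simpa [h] using hperp (i + 1) _ (mulVec_add_mem_krylov_succ g0 H hg0 (hmem i))

theorem gradient_eq_zero_of_le (hH : H.PosDef) (hmem : ∀ j, xhat j - x0 ∈ krylov g0 H j)
    (hperp : ∀ j, ∀ s ∈ krylov g0 H j, (H *ᵥ xhat j + c) ⬝ᵥ s = 0) {i k : ℕ} (hik : i ≤ k)
    (hi : H *ᵥ xhat i + c = 0) : H *ᵥ xhat k + c = 0 := by
  have hd : xhat k - xhat i ∈ krylov g0 H k := by
    simpa using sub_mem (hmem k) (krylov_mono g0 H hik (hmem i))
  have hHd : H *ᵥ (xhat k - xhat i) = H *ᵥ xhat k + c := by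
    rw [mulVec_sub, ← add_sub_add_right_eq_sub _ _ c, hi, sub_zero]
  have hd0 : xhat k - xhat i = 0 := by
    by_contra hne
    have h0 := hperp k _ hd
    rw [← hHd, dotProduct_comm] at h0
    simpa [h0] using hH.dotProduct_mulVec_pos hne
  rw [← hHd, hd0, mulVec_zero]

theorem pairwise_dotProduct_mulVec_eq_zero_of_steps (hH : H.IsSymm)
    (hmem : ∀ j, xhat j - x0 ∈ krylov g0 H j)
    (hperp : ∀ j, ∀ s ∈ krylov g0 H j, (H *ᵥ xhat j + c) ⬝ᵥ s = 0) {k : ℕ}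
    {q : Fin k → Fin n → ℝ} {lam : Fin k → ℝ}
    (hq : ∀ i : Fin k, q i = lam i • (xhat ((i : ℕ) + 1) - xhat i)) :
    Pairwise fun i j => q i ⬝ᵥ H *ᵥ q j = 0 := by
  have hlt : ∀ i j : Fin k, i < j → q i ⬝ᵥ H *ᵥ q j = 0 := fun i j hij => by
    rw [hq, hq, mulVec_smul, dotProduct_smul, smul_dotProduct,
      sub_dotProduct_mulVec_sub_eq_zero hmem hperp hij, smul_zero, smul_zero]
  intro i j hij
  rcases hij.lt_or_gt with h | h
  · exact hlt i j h
  · rw [hH.dotProduct_mulVec_comm]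
    exact hlt j i h

theorem linearIndependent_of_steps (hH : H.PosDef) (hg0 : g0 = H *ᵥ x0 + c)
    (hmem : ∀ j, xhat j - x0 ∈ krylov g0 H j)
    (hperp : ∀ j, ∀ s ∈ krylov g0 H j, (H *ᵥ xhat j + c) ⬝ᵥ s = 0) {k : ℕ}
    (hgk : H *ᵥ xhat k + c ≠ 0) {q : Fin k → Fin n → ℝ} {lam : Fin k → ℝ}
    (hlam : ∀ i, lam i ≠ 0) (hq : ∀ i : Fin k, q i = lam i • (xhat ((i : ℕ) + 1) - xhat i)) :
    LinearIndependent ℝ q := by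
  refine linearIndependent_of_pairwise_dotProduct_mulVec_eq_zero hH
    (pairwise_dotProduct_mulVec_eq_zero_of_steps hH.posSemidef.isSymm hmem hperp hq) fun i => ?_
  rw [hq i]
  refine smul_ne_zero (hlam i) (sub_ne_zero.2 fun h => hgk ?_)
  exact gradient_eq_zero_of_le hH hmem hperp i.2.le (gradient_eq_zero_of_succ_eq hg0 hmem hperp h)

theorem span_steps_eq_krylov (hmem : ∀ j, xhat j - x0 ∈ krylov g0 H j) {k : ℕ}
    (hdim : finrank ℝ (krylov g0 H k) = k) {q : Fin k → Fin n → ℝ} {lam : Fin k → ℝ}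
    (hq : ∀ i : Fin k, q i = lam i • (xhat ((i : ℕ) + 1) - xhat i))
    (hli : LinearIndependent ℝ q) : span ℝ (range q) = krylov g0 H k := by
  refine eq_of_le_of_finrank_le (span_le.2 (range_subset_iff.2 fun i => ?_)) ?_
  · rw [hq i]
    exact smul_mem _ _ (krylov_mono g0 H i.2 (sub_mem_krylov_succ hmem i))
  · rw [hdim, finrank_span_eq_card hli, Fintype.card_fin]

theorem gradient_dotProduct_mulVec_eq_zero_of_succ_lt (hmem : ∀ j, xhat j - x0 ∈ krylov g0 H j)
    (hperp : ∀ j, ∀ s ∈ krylov g0 H j, (H *ᵥ xhat j + c) ⬝ᵥ s = 0) {k : ℕ}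
    {q : Fin k → Fin n → ℝ} {lam : Fin k → ℝ}
    (hq : ∀ i : Fin k, q i = lam i • (xhat ((i : ℕ) + 1) - xhat i)) {i : Fin k}
    (hi : (i : ℕ) + 1 < k) : (H *ᵥ xhat k + c) ⬝ᵥ H *ᵥ q i = 0 := by
  rw [hq i, mulVec_smul, dotProduct_smul]
  exact smul_eq_zero_of_right _ (hperp k _
    (krylov_mono g0 H hi (mulVec_mem_krylov_succ g0 H (sub_mem_krylov_succ hmem i))))

theorem cgDirection_dotProduct_mulVec_eq_zero_of_mem_krylov (hH : H.PosDef)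
    (hmem : ∀ j, xhat j - x0 ∈ krylov g0 H j)
    (hperp : ∀ j, ∀ s ∈ krylov g0 H j, (H *ᵥ xhat j + c) ⬝ᵥ s = 0) {k : ℕ} (hk : 1 ≤ k)
    {q : Fin k → Fin n → ℝ} {lam : Fin k → ℝ}
    (hq : ∀ i : Fin k, q i = lam i • (xhat ((i : ℕ) + 1) - xhat i))
    (hli : LinearIndependent ℝ q) (hspan : span ℝ (range q) = krylov g0 H k) :
    ∀ s ∈ krylov g0 H k, cgDirection H (H *ᵥ xhat k + c) (q ⟨k - 1, by omega⟩) ⬝ᵥ H *ᵥ s = 0 := by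
  intro s hs
  refine cgDirection_dotProduct_mulVec_eq_zero
    (pairwise_dotProduct_mulVec_eq_zero_of_steps hH.posSemidef.isSymm hmem hperp hq)
    (fun i hi => gradient_dotProduct_mulVec_eq_zero_of_succ_lt hmem hperp hq ?_) ?_ (hspan ▸ hs)
  · have : (i : ℕ) ≠ k - 1 := fun h => hi (Fin.ext h)
    omega
  · simpa using (hH.dotProduct_mulVec_pos (hli.ne_zero _)).ne'

theorem krylov_succ_eq_sup_cgDirection (hg0 : g0 = H *ᵥ x0 + c)
    (hmem : ∀ j, xhat j - x0 ∈ krylov g0 H j)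
    (hperp : ∀ j, ∀ s ∈ krylov g0 H j, (H *ᵥ xhat j + c) ⬝ᵥ s = 0) {k : ℕ}
    (hdim : finrank ℝ (krylov g0 H k) = k) (hgk : H *ᵥ xhat k + c ≠ 0) {v : Fin n → ℝ}
    (hv : v ∈ krylov g0 H k) :
    krylov g0 H (k + 1) = krylov g0 H k ⊔ span ℝ {cgDirection H (H *ᵥ xhat k + c) v} := by
  refine krylov_succ_eq_sup_span g0 H hdim ?_ fun hd => hgk ?_
  · exact add_mem (neg_mem (mulVec_add_mem_krylov_succ g0 H hg0 (hmem k)))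
      (smul_mem _ _ (krylov_mono g0 H k.le_succ hv))
  · have hvg : v ⬝ᵥ (H *ᵥ xhat k + c) = 0 := by rw [dotProduct_comm]; exact hperp k v hv
    have h := hperp k _ hd
    rwa [dotProduct_comm, cgDirection_dotProduct_eq_neg hvg, neg_eq_zero,
      dotProduct_self_eq_zero] at h

end KrylovMinimizers

theorem unique_sigma_for_newton_step {n : ℕ}
    (H : Matrix (Fin n) (Fin n) ℝ) (hH : H.PosDef)
    (c x0 : Fin n → ℝ) (g0 : Fin n → ℝ) (hg0 : g0 = H.mulVec x0 + c)
    (f : (Fin n → ℝ) → ℝ)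
    (hf : ∀ x, f x = (1 / 2) * (x ⬝ᵥ H.mulVec x) + c ⬝ᵥ x)
    (xhat : ℕ → (Fin n → ℝ))
    (hmem : ∀ j : ℕ, xhat j - x0 ∈ krylov g0 H j)
    (hmin : ∀ j : ℕ, ∀ y : Fin n → ℝ, y - x0 ∈ krylov g0 H j → f (xhat j) ≤ f y)
    (k : ℕ) (hk : 1 ≤ k)
    (hdim : Module.finrank ℝ (krylov g0 H k) = k)
    (ghat : Fin n → ℝ) (hghat : ghat = H.mulVec (xhat k) + c) (hgne : ghat ≠ 0)
    (q : Fin k → (Fin n → ℝ)) (lam : Fin k → ℝ) (hlam : ∀ i, lam i ≠ 0)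
    (hq : ∀ i : Fin k, q i = lam i • (xhat ((i : ℕ) + 1) - xhat (i : ℕ)))
    (Q : Matrix (Fin n) (Fin k) ℝ) (hQ : ∀ i j, Q i j = q (Fin.rev j) i)
    (x : Fin n → ℝ) (hx : x - x0 ∈ krylov g0 H k)
    (qlast : Fin n → ℝ) (hqlast : qlast = q ⟨k - 1, by omega⟩)
    (qk : Fin n → ℝ)
    (hqk : qk = -ghat + ((ghat ⬝ᵥ H.mulVec qlast) / (qlast ⬝ᵥ H.mulVec qlast)) • qlast)
    (σk : ℝ)
    (hσk : σk = -(qk ⬝ᵥ H.mulVec qk) / (qk ⬝ᵥ (H.mulVec x + c)))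
    (B : ℝ → Matrix (Fin n) (Fin n) ℝ)
    (hB : ∀ σ : ℝ, B σ =
      σ • (1 - Q * (Qᵀ * Q)⁻¹ * Qᵀ) + H * Q * (Qᵀ * H * Q)⁻¹ * Qᵀ * H) :
    ∀ σ : ℝ, 0 < σ → ∀ p : Fin n → ℝ, (B σ).mulVec p = -(H.mulVec x + c) →
      (((x + p) - x0 ∈ krylov g0 H (k + 1) ∧
          ∀ y : Fin n → ℝ, y - x0 ∈ krylov g0 H (k + 1) → f (x + p) ≤ f y) ↔
        σ = σk) := by
  intro σ hσ p hp
  obtain rfl : f = quadObjective H c := funext hf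
  obtain rfl : qk = cgDirection H ghat qlast := hqk
  subst hghat hqlast hσk
  have hperp : ∀ j, ∀ s ∈ krylov g0 H j, (H *ᵥ xhat j + c) ⬝ᵥ s = 0 := fun j =>
    (isMinOnCoset_quadObjective_iff hH.posSemidef (hmem j)).1 ⟨hmem j, hmin j⟩
  have hli := linearIndependent_of_steps hH hg0 hmem hperp hgne hlam hq
  have hspan := span_steps_eq_krylov hmem hdim hq hli
  have hqkH := cgDirection_dotProduct_mulVec_eq_zero_of_mem_krylov hH hmem hperp hk hq hli hspan
  have hqlastK : q ⟨k - 1, by omega⟩ ∈ krylov g0 H k := hspan ▸ subset_span (mem_range_self _)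
  have hcol : Q.col = q ∘ Fin.rev := funext fun j => funext fun i => hQ i j
  have hrange : LinearMap.range Q.mulVecLin = krylov g0 H k := by
    rw [range_mulVecLin, hcol, Fin.rev_surjective.range_comp, hspan]
  have hxk : xhat k - x ∈ krylov g0 H k := by simpa using sub_mem (hmem k) hx
  have hxp := add_eq_of_fullMemoryApprox_mulVec_eq_of_posDef hH
    (mulVec_injective_iff.2 (hcol ▸ hli.comp _ Fin.rev_injective)) hrange hσ.ne' hxk (hperp k)
    hqkH (by rw [cgDirection_add_self]; exact smul_mem _ _ hqlastK) ((hB σ).symm ▸ hp)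
  have hqkg := cgDirection_dotProduct_eq_neg (H := H)
    (by rw [dotProduct_comm]; exact hperp k _ hqlastK)
  change IsMinOnCoset _ x0 _ (x + p) ↔ _
  rw [krylov_succ_eq_sup_cgDirection hg0 hmem hperp hdim hgne hqlastK, hxp,
    isMinOnCoset_add_smul_iff hH.posSemidef (hmem k) (hperp k) hqkH,
    dotProduct_comm (H *ᵥ xhat k + c), dotProduct_mulVec_add_eq hqkH hxk, hqkg, neg_neg,
    neg_div_neg_eq, inv_mul_eq_iff_eq_mul₀ hσ.ne',
    eq_div_iff (fun h => hgne (dotProduct_self_eq_zero.1 h)), eq_comm]
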